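/- arXiv:1902.06316 — 5 statements merged into one kernel-verified Lean document; each statement's English description precedes it below -/
import Mathlib

section
/- Let 1 ≤ r ≤ √2, let θ_max = arccos(1 − 2r²/(4 − r²)), and define h(θ) = Leb¹({ℓ ∈ [0,r] : (1−ℓ²/4)(2−2cos θ) ≤ r²}) for θ ∈ [0,π]. Then for every θ₀ ∈ [0, θ_max], θ_max · ∫₀^{θ₀} h(θ) dθ ≥ θ₀ · ∫₀^{θ_max} h(θ) dθ. (Equivalently, the probability measure on [0,θ_max] with density proportional to h, namely μ_I, is stochastically dominated by the uniform probability measure on [0,θ_max], namely μ_B, as a function of θ.) -/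
open Real MeasureTheory

/-- `hSlice r θ` is the 1-dimensional Lebesgue measure of the vertical slice
of the confined moduli region `D_r` over `θ`, i.e. the density of the
marginal measure `μ_I` on the boundary part `∂^ℓ M⁺_{4,r}`. -/
noncomputable def hSlice (r θ : ℝ) : ℝ :=
  (volume {ℓ : ℝ | ℓ ∈ Set.Icc 0 r ∧
    (1 - ℓ ^ 2 / 4) * (2 - 2 * Real.cos θ) ≤ r ^ 2}).toReal

lemma hSlice_nonneg (r θ : ℝ) : 0 ≤ hSlice r θ := ENNReal.toReal_nonneg

lemma hSlice_anti (r : ℝ) (hr : r ≤ 2) : AntitoneOn (hSlice r) (Set.Icc 0 π) := by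
  intro θ hθ θ' hθ' hle
  unfold hSlice
  have hsub : {ℓ : ℝ | ℓ ∈ Set.Icc 0 r ∧ (1 - ℓ ^ 2 / 4) * (2 - 2 * Real.cos θ') ≤ r ^ 2} ⊆
      {ℓ : ℝ | ℓ ∈ Set.Icc 0 r ∧ (1 - ℓ ^ 2 / 4) * (2 - 2 * Real.cos θ) ≤ r ^ 2} := by
    rintro ℓ ⟨hmem, hineq⟩
    refine ⟨hmem, le_trans ?_ hineq⟩
    have h1 : 0 ≤ 1 - ℓ ^ 2 / 4 := by nlinarith [hmem.1, hmem.2]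
    have hcos : Real.cos θ' ≤ Real.cos θ :=
      Real.cos_le_cos_of_nonneg_of_le_pi hθ.1 hθ'.2 hle
    nlinarith
  have hfin : volume {ℓ : ℝ | ℓ ∈ Set.Icc 0 r ∧
      (1 - ℓ ^ 2 / 4) * (2 - 2 * Real.cos θ) ≤ r ^ 2} ≠ ⊤ :=
    ne_top_of_le_ne_top (measure_Icc_lt_top).ne (measure_mono (fun ℓ h => h.1))
  exact ENNReal.toReal_mono hfin (measure_mono hsub)

/-- For `1 ≤ r ≤ √2` and `θ_max = arccos(1 − 2r²/(4 − r²))`, the measure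
with density proportional to `h` on `[0, θ_max]` (namely `μ_I`) is
stochastically dominated by the uniform measure on `[0, θ_max]` (namely
`μ_B`): for every `θ₀ ∈ [0, θ_max]`,
`θ_max · ∫₀^{θ₀} h ≥ θ₀ · ∫₀^{θ_max} h`. -/
theorem hSlice_stochastic_ordering (r : ℝ) (h1 : 1 ≤ r) (h2 : r ≤ Real.sqrt 2)
    (θ₀ : ℝ)
    (hθ₀ : θ₀ ∈ Set.Icc (0 : ℝ) (Real.arccos (1 - 2 * r ^ 2 / (4 - r ^ 2)))) :
    θ₀ * ∫ θ in (0 : ℝ)..(Real.arccos (1 - 2 * r ^ 2 / (4 - r ^ 2))),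
        hSlice r θ ≤
      Real.arccos (1 - 2 * r ^ 2 / (4 - r ^ 2)) *
        ∫ θ in (0 : ℝ)..θ₀, hSlice r θ := by
  set T := Real.arccos (1 - 2 * r ^ 2 / (4 - r ^ 2)) with hT
  have hr2 : r ≤ 2 := h2.trans (by
    have : Real.sqrt 2 ≤ Real.sqrt 4 := Real.sqrt_le_sqrt (by norm_num)
    have h4 : Real.sqrt 4 = 2 := by
      rw [show (4:ℝ) = 2^2 by norm_num, Real.sqrt_sq (by norm_num)]
    linarith)
  have hTpi : T ≤ π := Real.arccos_le_pi _
  obtain ⟨h0θ, hθT⟩ := hθ₀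
  have hanti := hSlice_anti r hr2
  have hθπ : θ₀ ≤ π := hθT.trans hTpi
  -- integrability
  have hint1 : IntervalIntegrable (hSlice r) volume 0 θ₀ := by
    apply AntitoneOn.intervalIntegrable
    apply hanti.mono
    rw [Set.uIcc_of_le h0θ]
    exact Set.Icc_subset_Icc le_rfl hθπ
  have hint2 : IntervalIntegrable (hSlice r) volume θ₀ T := by
    apply AntitoneOn.intervalIntegrable
    apply hanti.mono
    rw [Set.uIcc_of_le hθT]
    exact Set.Icc_subset_Icc h0θ hTpi
  have hsplit : (∫ θ in (0:ℝ)..T, hSlice r θ) =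
      (∫ θ in (0:ℝ)..θ₀, hSlice r θ) + (∫ θ in θ₀..T, hSlice r θ) :=
    (intervalIntegral.integral_add_adjacent_intervals hint1 hint2).symm
  set h₀ := hSlice r θ₀ with hh₀
  have hB : (∫ θ in θ₀..T, hSlice r θ) ≤ (T - θ₀) * h₀ := by
    have := intervalIntegral.integral_mono_on hθT hint2
      (intervalIntegrable_const (c := h₀))
      (fun x hx => hanti ⟨h0θ, hθπ⟩ ⟨h0θ.trans hx.1, hx.2.trans hTpi⟩ hx.1)
    simpa using this
  have hA : θ₀ * h₀ ≤ (∫ θ in (0:ℝ)..θ₀, hSlice r θ) := by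
    have := intervalIntegral.integral_mono_on h0θ
      (intervalIntegrable_const (c := h₀)) hint1
      (fun x hx => hanti ⟨hx.1, (hx.2.trans hθπ)⟩ ⟨h0θ, hθπ⟩ hx.2)
    simpa using this
  have hh0 : 0 ≤ h₀ := hSlice_nonneg r θ₀
  have hBnn : 0 ≤ (∫ θ in θ₀..T, hSlice r θ) :=
    intervalIntegral.integral_nonneg hθT (fun x _ => hSlice_nonneg r x)
  rw [hsplit]
  nlinarith [mul_le_mul_of_nonneg_left hB h0θ,
    mul_le_mul_of_nonneg_left hA (sub_nonneg.mpr hθT)]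
end

section
/- For all t ∈ (0,1) and c ∈ [−1,1), the inequality (1 − c)·√(1 − (2t − 1)²) ≤ 2·√(1 − (t + (1−t)·c)²) holds. -/
open Real

/-- The analytic core of the curvature monotonicity in the action
coordinate: for `t ∈ (0,1)` and `c ∈ [−1,1)`,
`(1 − c)√(1 − (2t − 1)²) ≤ 2√(1 − (t + (1−t)c)²)`. -/
theorem curvature_derivative_core (t c : ℝ) (ht : t ∈ Set.Ioo (0 : ℝ) 1)
    (hc : c ∈ Set.Ico (-1 : ℝ) 1) :
    (1 - c) * Real.sqrt (1 - (2 * t - 1) ^ 2) ≤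
      2 * Real.sqrt (1 - (t + (1 - t) * c) ^ 2) := by
  obtain ⟨ht0, ht1⟩ := ht
  obtain ⟨hc0, hc1⟩ := hc
  have h1c : (0:ℝ) ≤ 1 - c := by linarith
  have key : (1 - c) ^ 2 * (1 - (2 * t - 1) ^ 2) ≤ 4 * (1 - (t + (1 - t) * c) ^ 2) := by
    nlinarith [mul_nonneg (mul_nonneg (by linarith : (0:ℝ) ≤ 1 - t) h1c) (by linarith : (0:ℝ) ≤ 1 + c)]
  calc (1 - c) * Real.sqrt (1 - (2 * t - 1) ^ 2)
      = Real.sqrt ((1 - c) ^ 2 * (1 - (2 * t - 1) ^ 2)) := by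
        rw [Real.sqrt_mul (sq_nonneg _), Real.sqrt_sq h1c]
    _ ≤ Real.sqrt (4 * (1 - (t + (1 - t) * c) ^ 2)) := Real.sqrt_le_sqrt key
    _ = 2 * Real.sqrt (1 - (t + (1 - t) * c) ^ 2) := by
        rw [Real.sqrt_mul (by norm_num : (0:ℝ) ≤ 4), show Real.sqrt 4 = 2 by
          rw [show (4:ℝ) = 2^2 by norm_num, Real.sqrt_sq (by norm_num)]]
end

section
/- Let n ≥ 3 and let v : ZMod n → ℝ³ be a closed equilateral n-gon (i.e., ‖v(i+1) − v(i)‖ = 1 for all i) whose diameter is at most 1 (i.e., ‖v(i) − v(j)‖ ≤ 1 for all i, j). Then its total curvature satisfies Σᵢ ∠(v(i+1) − v(i), v(i+2) − v(i+1)) ≥ 2πn/3. -/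
/-!
Every turning angle is at least `2π/3`: consecutive edges `u`, `w` are unit vectors with
`u + w = v (i + 2) - v i`, so `2 + 2⟪u, w⟫ = ‖u + w‖² ≤ 1`, i.e. `cos ∠(u, w) ≤ -1/2`.
-/

open Real RealInnerProductSpace

theorem Real.cos_two_pi_div_three : cos (2 * π / 3) = -(1 / 2) := by
  rw [show 2 * π / 3 = π - π / 3 by ring, cos_pi_sub, cos_pi_div_three]

namespace InnerProductGeometry

variable {V : Type*} [NormedAddCommGroup V] [InnerProductSpace ℝ V]

theorem two_pi_div_three_le_angle_of_norm_add_le_one {u w : V} (hu : ‖u‖ = 1) (hw : ‖w‖ = 1)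
    (h : ‖u + w‖ ≤ 1) : 2 * π / 3 ≤ angle u w := by
  have hinner : ⟪u, w⟫ ≤ -(1 / 2) := by
    have hsq : ‖u + w‖ ^ 2 = 2 + 2 * ⟪u, w⟫ := by rw [norm_add_sq_real, hu, hw]; ring
    nlinarith [norm_nonneg (u + w)]
  have hcos : cos (angle u w) ≤ cos (2 * π / 3) := by
    rw [cos_angle, hu, hw, cos_two_pi_div_three]
    simpa using hinner
  exact (strictAntiOn_cos.le_iff_ge ⟨angle_nonneg u w, angle_le_pi u w⟩
    ⟨by positivity, by linarith [pi_pos]⟩).1 hcos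

end InnerProductGeometry

open InnerProductGeometry in
theorem two_pi_div_three_le_angle_edges_of_diam_le_one {n : ℕ} {E : Type*} [NormedAddCommGroup E]
    [InnerProductSpace ℝ E] (v : ZMod n → E) (heq : ∀ i : ZMod n, dist (v (i + 1)) (v i) = 1)
    (hdiam : ∀ i j : ZMod n, dist (v i) (v j) ≤ 1) (i : ZMod n) :
    2 * π / 3 ≤ angle (v (i + 1) - v i) (v (i + 2) - v (i + 1)) := by
  apply two_pi_div_three_le_angle_of_norm_add_le_one
  · rw [← dist_eq_norm, heq]
  · rw [← dist_eq_norm, ← one_add_one_eq_two, ← add_assoc, heq]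
  · rw [sub_add_sub_cancel', ← dist_eq_norm]
    exact hdiam _ _

theorem totalCurvature_ge_of_diameter_le_one_general (n : ℕ) [NeZero n]
    (v : ZMod n → EuclideanSpace ℝ (Fin 3))
    (heq : ∀ i : ZMod n, dist (v (i + 1)) (v i) = 1)
    (hdiam : ∀ i j : ZMod n, dist (v i) (v j) ≤ 1) :
    2 * Real.pi * n / 3 ≤
      ∑ i : ZMod n,
        InnerProductGeometry.angle (v (i + 1) - v i) (v (i + 2) - v (i + 1)) := by
  calc 2 * π * n / 3 = ∑ _i : ZMod n, 2 * π / 3 := by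
        rw [Finset.sum_const, Finset.card_univ, ZMod.card, nsmul_eq_mul]
        ring
    _ ≤ _ := Finset.sum_le_sum fun i _ =>
        two_pi_div_three_le_angle_edges_of_diam_le_one v heq hdiam i

/-- A closed equilateral `n`-gon in `ℝ³` (all edges of length 1) whose
diameter is at most 1 has total curvature at least `2πn/3`. -/
theorem totalCurvature_ge_of_diameter_le_one (n : ℕ) (hn : 3 ≤ n) [NeZero n]
    (v : ZMod n → EuclideanSpace ℝ (Fin 3))
    (heq : ∀ i : ZMod n, dist (v (i + 1)) (v i) = 1)
    (hdiam : ∀ i j : ZMod n, dist (v i) (v j) ≤ 1) :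
    2 * Real.pi * n / 3 ≤
      ∑ i : ZMod n,
        InnerProductGeometry.angle (v (i + 1) - v i) (v (i + 2) - v (i + 1)) :=
  totalCurvature_ge_of_diameter_le_one_general n v heq hdiam
end

section
/- There exists a constant C > 0 such that for every even integer n ≥ 4, every ε ∈ (0,1), and every closed equilateral n-gon v : ZMod n → ℝ³ whose diameter is at least n/2 − ε, the total curvature satisfies Σᵢ ∠(v(i+1) − v(i), v(i+2) − v(i+1)) ≤ 2π + C·n·√ε. -/
open Real
open scoped RealInnerProductSpace

section Helpers
variable {V : Type*} [NormedAddCommGroup V] [InnerProductSpace ℝ V]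

lemma tc_angle_aux {a b w : V} {ε : ℝ} (hε : 0 ≤ ε)
    (ha : ‖a‖ = 1) (hb : ‖b‖ = 1) (hw : ‖w‖ = 1)
    (h1 : 1 - ε ≤ ⟪a, w⟫) (h2 : 1 - ε ≤ ⟪b, w⟫) :
    InnerProductGeometry.angle a b ≤ π * Real.sqrt 2 * Real.sqrt ε := by
  have haw : ‖a - w‖ ^ 2 ≤ 2 * ε := by
    rw [norm_sub_sq_real, ha, hw]; nlinarith
  have hbw : ‖b - w‖ ^ 2 ≤ 2 * ε := by
    rw [norm_sub_sq_real, hb, hw]; nlinarith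
  have htri : ‖a - b‖ ≤ ‖a - w‖ + ‖b - w‖ := by
    calc ‖a - b‖ = ‖(a - w) - (b - w)‖ := by abel_nf
    _ ≤ ‖a - w‖ + ‖b - w‖ := norm_sub_le _ _
  have hab2 : ‖a - b‖ ^ 2 ≤ 8 * ε := by
    nlinarith [mul_self_le_mul_self (norm_nonneg (a - b)) htri,
      sq_nonneg (‖a - w‖ - ‖b - w‖), norm_nonneg (a - w), norm_nonneg (b - w)]
  have hinner : 1 - 4 * ε ≤ ⟪a, b⟫ := by
    have := norm_sub_sq_real a b
    rw [ha, hb] at this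
    nlinarith
  set θ := InnerProductGeometry.angle a b with hθ
  have hθ0 : 0 ≤ θ := InnerProductGeometry.angle_nonneg a b
  have hθπ : θ ≤ π := InnerProductGeometry.angle_le_pi a b
  have hcos : Real.cos θ = ⟪a, b⟫ := by
    rw [hθ, InnerProductGeometry.cos_angle, ha, hb]; norm_num
  have hub : Real.cos θ ≤ 1 - 2 / π ^ 2 * θ ^ 2 :=
    Real.cos_le_one_sub_mul_cos_sq (by rw [abs_of_nonneg hθ0]; exact hθπ)
  have hπ0 : (0:ℝ) < π := Real.pi_pos
  have hθsq : θ ^ 2 ≤ 2 * π ^ 2 * ε := by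
    have h4 : 2 / π ^ 2 * θ ^ 2 ≤ 4 * ε := by nlinarith
    have hπ2 : (0:ℝ) < π ^ 2 := by positivity
    rw [div_mul_eq_mul_div, div_le_iff₀ hπ2] at h4
    nlinarith
  calc θ ≤ Real.sqrt (2 * π ^ 2 * ε) :=
        (Real.le_sqrt hθ0 (by positivity)).mpr hθsq
    _ = π * Real.sqrt 2 * Real.sqrt ε := by
        rw [show (2 * π ^ 2 * ε : ℝ) = π ^ 2 * (2 * ε) by ring, Real.sqrt_mul (by positivity),
          Real.sqrt_sq hπ0.le, Real.sqrt_mul (by norm_num)]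
        ring

lemma tc_chain_aux {w : V} (hw : ‖w‖ = 1) {e : ℕ → V} (he : ∀ s, ‖e s‖ = 1)
    {m : ℕ} {ε : ℝ} (h : (m : ℝ) - ε ≤ ∑ s ∈ Finset.range m, ⟪e s, w⟫) :
    ∀ s < m, 1 - ε ≤ ⟪e s, w⟫ := by
  intro s hs
  have key : ∀ t, ⟪e t, w⟫ ≤ 1 := fun t => by
    calc ⟪e t, w⟫ ≤ ‖e t‖ * ‖w‖ := real_inner_le_norm _ _
    _ = 1 := by rw [he, hw, one_mul]
  have h2 : ∑ t ∈ Finset.range m, (1 - ⟪e t, w⟫) ≤ ε := by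
    rw [Finset.sum_sub_distrib, Finset.sum_const, Finset.card_range, nsmul_eq_mul, mul_one]
    linarith
  have h3 : 1 - ⟪e s, w⟫ ≤ ∑ t ∈ Finset.range m, (1 - ⟪e t, w⟫) :=
    Finset.single_le_sum (f := fun t => 1 - ⟪e t, w⟫)
      (fun t _ => by have := key t; simp only [sub_nonneg]; exact this)
      (Finset.mem_range.2 hs)
  linarith

end Helpers

/-- There is a constant `C > 0` such that every closed equilateral `n`-gon
(`n ≥ 4` even) in `ℝ³` whose diameter is at least `n/2 − ε` (for `ε ∈ (0,1)`)
has total curvature at most `2π + C·n·√ε`. -/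
theorem totalCurvature_le_of_diameter_ge :
    ∃ C : ℝ, 0 < C ∧
      ∀ (n : ℕ) [NeZero n], Even n → 4 ≤ n →
        ∀ ε : ℝ, ε ∈ Set.Ioo (0 : ℝ) 1 →
          ∀ v : ZMod n → EuclideanSpace ℝ (Fin 3),
            (∀ i : ZMod n, dist (v (i + 1)) (v i) = 1) →
            (∃ i j : ZMod n, (n : ℝ) / 2 - ε ≤ dist (v i) (v j)) →
            ∑ i : ZMod n,
                InnerProductGeometry.angle (v (i + 1) - v i)
                  (v (i + 2) - v (i + 1)) ≤
              2 * Real.pi + C * n * Real.sqrt ε := by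
  refine ⟨5, by norm_num, ?_⟩
  intro n _ heven hn4 ε hε v hunit hdiam
  obtain ⟨i, j, hdij⟩ := hdiam
  obtain ⟨m, hm⟩ := heven
  have hε0 : 0 < ε := hε.1
  have hε1 : ε < 1 := hε.2
  have hm2 : 2 ≤ m := by omega
  have hn2 : (n:ℝ) / 2 = m := by rw [hm]; push_cast; ring
  rw [hn2] at hdij
  -- edge vectors
  set e : ZMod n → EuclideanSpace ℝ (Fin 3) := fun t => v (t + 1) - v t with he_def
  have henorm : ∀ t, ‖e t‖ = 1 := fun t => by
    simp only [he_def]; rw [← dist_eq_norm]; exact hunit t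
  -- distance bound along the polygon
  have distb : ∀ (a : ZMod n) (M : ℕ), dist (v (a + M)) (v a) ≤ M := by
    intro a M
    induction M with
    | zero => simp
    | succ M ih =>
      have h1 : dist (v (a + (M:ℕ) + 1)) (v (a + (M:ℕ))) = 1 := hunit _
      have hcast : a + ((M+1:ℕ) : ZMod n) = a + (M:ℕ) + 1 := by push_cast; ring
      rw [hcast]
      calc dist (v (a + (M:ℕ) + 1)) (v a)
          ≤ dist (v (a + (M:ℕ) + 1)) (v (a + (M:ℕ))) + dist (v (a + (M:ℕ))) (v a) :=
            dist_triangle _ _ _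
        _ ≤ 1 + M := by rw [h1]; linarith
        _ = ((M+1:ℕ) : ℝ) := by push_cast; ring
  -- telescoping
  have tele : ∀ (a : ZMod n) (M : ℕ),
      ∑ s ∈ Finset.range M, e (a + (s:ℕ)) = v (a + (M:ℕ)) - v a := by
    intro a M
    calc ∑ s ∈ Finset.range M, e (a + (s:ℕ))
        = ∑ s ∈ Finset.range M,
            ((fun s : ℕ => v (a + (s:ℕ))) (s+1) - (fun s : ℕ => v (a + (s:ℕ))) s) := by
          apply Finset.sum_congr rfl
          intro s _
          have hc : a + ((s+1:ℕ) : ZMod n) = a + (s:ℕ) + 1 := by push_cast; ring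
          simp only [he_def, hc]
      _ = v (a + (M:ℕ)) - v (a + ((0:ℕ):ZMod n)) := Finset.sum_range_sub (fun s : ℕ => v (a + (s:ℕ))) M
      _ = v (a + (M:ℕ)) - v a := by norm_num
  set d := dist (v i) (v j) with hd_def
  have hd1 : (m:ℝ) - ε ≤ d := hdij
  have hmr : (2:ℝ) ≤ m := by exact_mod_cast hm2
  have hd0 : 0 < d := by linarith
  have hij_ne : i ≠ j := by
    intro h
    rw [hd_def, h, dist_self] at hd0
    exact lt_irrefl 0 hd0
  set k := (j - i).val with hk_def
  have hcast_k : ((k : ℕ) : ZMod n) = j - i := ZMod.natCast_rightInverse _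
  have hk_lt : k < n := ZMod.val_lt _
  have hik : i + ((k:ℕ) : ZMod n) = j := by rw [hcast_k]; ring
  have hdk : d ≤ (k:ℝ) := by
    have := distb i k
    rw [hik] at this
    rw [hd_def, dist_comm]
    exact this
  have hneg : (i - j).val = n - k := by
    have hji : i - j = -(j - i) := by ring
    rw [hji, ZMod.neg_val, if_neg (sub_ne_zero.2 (Ne.symm hij_ne))]
  have hcast_nk : ((n - k : ℕ) : ZMod n) = i - j := by
    rw [← hneg]; exact ZMod.natCast_rightInverse _
  have hjnk : j + ((n - k : ℕ) : ZMod n) = i := by rw [hcast_nk]; ring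
  have hdnk : d ≤ ((n - k : ℕ) : ℝ) := by
    have := distb j (n - k)
    rw [hjnk] at this
    rw [hd_def]
    exact this
  -- k = m
  have hk_ge : m ≤ k := by
    have h1 : (m:ℝ) < (k:ℝ) + 1 := by linarith
    have : m < k + 1 := by exact_mod_cast h1
    omega
  have hk_le : k ≤ m := by
    have hc : ((n - k : ℕ) : ℝ) = (n:ℝ) - k := by
      rw [Nat.cast_sub hk_lt.le]
    have hnr : (n:ℝ) = (m:ℝ) + m := by rw [hm]; push_cast; ring
    have h1 : (m:ℝ) - ε ≤ (n:ℝ) - k := by rw [← hc]; linarith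
    have h2 : (k:ℝ) < (m:ℝ) + 1 := by linarith
    have : k < m + 1 := by exact_mod_cast h2
    omega
  have hk : k = m := le_antisymm hk_le hk_ge
  have hijm : j = i + ((m:ℕ) : ZMod n) := by rw [← hik, hk]
  have hjim : i = j + ((m:ℕ) : ZMod n) := by
    rw [hijm, add_assoc, ← Nat.cast_add]
    have h0 : ((m + m : ℕ) : ZMod n) = 0 := by rw [← hm]; exact ZMod.natCast_self n
    rw [h0, add_zero]
  -- the unit direction
  set u := d⁻¹ • (v j - v i) with hu_def
  have hdnorm : d = ‖v j - v i‖ := by rw [hd_def, dist_comm, dist_eq_norm]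
  have hu1 : ‖u‖ = 1 := by
    rw [hu_def, norm_smul, ← hdnorm, Real.norm_eq_abs, abs_inv, abs_of_pos hd0,
      inv_mul_cancel₀ hd0.ne']
  have hinner_d : ⟪v j - v i, u⟫ = d := by
    rw [hu_def, real_inner_smul_right, real_inner_self_eq_norm_sq, ← hdnorm, sq,
      ← mul_assoc, inv_mul_cancel₀ hd0.ne', one_mul]
  -- chain 1
  have hvim : v (i + ((m:ℕ) : ZMod n)) = v j := by rw [← hijm]
  have hsum1 : (m:ℝ) - ε ≤ ∑ s ∈ Finset.range m, ⟪e (i + (s:ℕ)), u⟫ := by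
    rw [← sum_inner, tele i m, hvim, hinner_d]
    exact hd1
  have hA : ∀ s < m, 1 - ε ≤ ⟪e (i + (s:ℕ)), u⟫ :=
    tc_chain_aux hu1 (fun s => henorm _) hsum1
  -- chain 2
  have hvjm : v (j + ((m:ℕ) : ZMod n)) = v i := by rw [← hjim]
  have hnu1 : ‖-u‖ = 1 := by rw [norm_neg]; exact hu1
  have hsum2 : (m:ℝ) - ε ≤ ∑ s ∈ Finset.range m, ⟪e (j + (s:ℕ)), -u⟫ := by
    rw [← sum_inner, tele j m, hvjm]
    have : v i - v j = -(v j - v i) := by abel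
    rw [this, inner_neg_neg, hinner_d]
    exact hd1
  have hB : ∀ s < m, 1 - ε ≤ ⟪e (j + (s:ℕ)), -u⟫ :=
    tc_chain_aux hnu1 (fun s => henorm _) hsum2
  -- pointwise bound
  set B := π * Real.sqrt 2 * Real.sqrt ε with hB_def
  set t₁ := i + ((m - 1 : ℕ) : ZMod n) with ht1_def
  set t₂ := j + ((m - 1 : ℕ) : ZMod n) with ht2_def
  have ht12 : t₁ ≠ t₂ := by
    intro h
    rw [ht1_def, ht2_def] at h
    exact hij_ne (add_right_cancel h)
  have hT2 : t₂ = i + ((n - 1 : ℕ) : ZMod n) := by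
    rw [ht2_def, hijm, add_assoc, ← Nat.cast_add]
    congr 2
    omega
  have hpoint : ∀ t : ZMod n, InnerProductGeometry.angle (e t) (e (t+1)) ≤
      if t = t₁ ∨ t = t₂ then π else B := by
    intro t
    by_cases hcase : t = t₁ ∨ t = t₂
    · rw [if_pos hcase]; exact InnerProductGeometry.angle_le_pi _ _
    rw [if_neg hcase]
    push_neg at hcase
    obtain ⟨hne1, hne2⟩ := hcase
    set s := (t - i).val with hs_def
    have hts : t = i + ((s:ℕ) : ZMod n) := by
      rw [show ((s:ℕ) : ZMod n) = t - i from ZMod.natCast_rightInverse _]; ring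
    have hs_lt : s < n := ZMod.val_lt _
    have hs1 : s ≠ m - 1 := by
      intro h; exact hne1 (by rw [hts, h, ht1_def])
    have hs2 : s ≠ n - 1 := by
      intro h; exact hne2 (by rw [hts, h, hT2])
    have hcases : s + 1 < m ∨ (m ≤ s ∧ (s - m) + 1 < m) := by omega
    rcases hcases with h | ⟨hms, h⟩
    · have ht1e : t + 1 = i + ((s+1 : ℕ) : ZMod n) := by rw [hts]; push_cast; ring
      rw [ht1e, hts]
      exact tc_angle_aux hε0.le (henorm _) (henorm _) hu1
        (hA s (by omega)) (hA (s+1) h)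
    · set r := s - m with hr_def
      have htr : t = j + ((r:ℕ) : ZMod n) := by
        rw [hts, hijm, add_assoc, ← Nat.cast_add]
        congr 2
        omega
      have htr1 : t + 1 = j + ((r+1 : ℕ) : ZMod n) := by rw [htr]; push_cast; ring
      rw [htr1, htr]
      exact tc_angle_aux hε0.le (henorm _) (henorm _) hnu1
        (hB r (by omega)) (hB (r+1) h)
  -- summation
  have hrw : ∀ t : ZMod n,
      InnerProductGeometry.angle (v (t + 1) - v t) (v (t + 2) - v (t + 1))
        = InnerProductGeometry.angle (e t) (e (t + 1)) := by
    intro t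
    have h2 : t + 2 = t + 1 + 1 := by ring
    simp only [he_def, h2]
  calc ∑ t : ZMod n, InnerProductGeometry.angle (v (t + 1) - v t) (v (t + 2) - v (t + 1))
      = ∑ t : ZMod n, InnerProductGeometry.angle (e t) (e (t + 1)) :=
        Finset.sum_congr rfl (fun t _ => hrw t)
    _ ≤ ∑ t : ZMod n, (if t = t₁ ∨ t = t₂ then π else B) :=
        Finset.sum_le_sum (fun t _ => hpoint t)
    _ = 2 * π + ((n:ℝ) - 2) * B := by
        have hSsub : ({t₁, t₂} : Finset (ZMod n)) ⊆ Finset.univ := Finset.subset_univ _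
        rw [← Finset.sum_sdiff hSsub]
        have h1 : ∑ t ∈ Finset.univ \ ({t₁, t₂} : Finset (ZMod n)),
            (if t = t₁ ∨ t = t₂ then π else B)
            = ∑ _t ∈ Finset.univ \ ({t₁, t₂} : Finset (ZMod n)), B := by
          apply Finset.sum_congr rfl
          intro t ht
          rw [Finset.mem_sdiff, Finset.mem_insert, Finset.mem_singleton] at ht
          rw [if_neg]
          tauto
        have h2 : ∑ t ∈ ({t₁, t₂} : Finset (ZMod n)),
            (if t = t₁ ∨ t = t₂ then π else B) = 2 * π := by
          rw [Finset.sum_pair ht12, if_pos (Or.inl rfl), if_pos (Or.inr rfl)]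
          ring
        rw [h1, h2, Finset.sum_const, Finset.card_sdiff_of_subset hSsub, Finset.card_univ,
          ZMod.card, Finset.card_pair ht12, nsmul_eq_mul]
        have hc : ((n - 2 : ℕ) : ℝ) = (n:ℝ) - 2 := by
          rw [Nat.cast_sub (by omega : 2 ≤ n)]
          norm_num
        rw [hc]
        ring
    _ ≤ 2 * π + 5 * (n:ℝ) * Real.sqrt ε := by
        have hs2' : Real.sqrt 2 ≤ 1.5 := by
          rw [show (1.5:ℝ) = Real.sqrt (1.5^2) from (Real.sqrt_sq (by norm_num)).symm]
          exact Real.sqrt_le_sqrt (by norm_num)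
        have hπ : π ≤ 3.15 := Real.pi_lt_d2.le
        have hεs : 0 ≤ Real.sqrt ε := Real.sqrt_nonneg ε
        have h2s : 0 ≤ Real.sqrt 2 := Real.sqrt_nonneg 2
        have hn4' : (4:ℝ) ≤ n := by exact_mod_cast hn4
        have hB0 : 0 ≤ B := by
          rw [hB_def]; positivity
        have hBle : B ≤ 5 * Real.sqrt ε := by
          have hπ2 : π * Real.sqrt 2 ≤ 5 :=
            le_trans (mul_le_mul hπ hs2' h2s (by norm_num)) (by norm_num)
          calc B = (π * Real.sqrt 2) * Real.sqrt ε := by rw [hB_def]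
          _ ≤ 5 * Real.sqrt ε := mul_le_mul_of_nonneg_right hπ2 hεs
        have hfin : ((n:ℝ) - 2) * B ≤ (n:ℝ) * (5 * Real.sqrt ε) :=
          mul_le_mul (by linarith) hBle hB0 (by linarith)
        linarith
end

section
/- For every even integer n ≥ 4 there exists ε > 0 such that every closed equilateral n-gon v : ZMod n → ℝ³ whose diameter is at least n/2 − ε has total curvature strictly less than 4π, i.e., Σᵢ ∠(v(i+1) − v(i), v(i+2) − v(i+1)) < 4π. (By the Fary–Milnor theorem, any such polygon is therefore unknotted.) -/
open Real

/-! Write `n = 2r`. Along a closed polygon with unit edges no chord is longer than `r`, and a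
chord longer than `r - 1` joins antipodal vertices `p` and `p + r`. If it has length at least
`r - ε`, the triangle inequality along either `r`-step arc between them forces every two-step chord
`v t, v (t + 2)` whose middle vertex is neither `p` nor `p + r` to have length at least `2 - ε`;
with `cos B = 1 - 2ε` the turning angle there is then at most `B = 2π/n`. The two remaining
vertices contribute at most `π` each, so the total curvature is at most `2π + (n - 2)B < 4π`. -/

open Finset in
theorem sum_le_card_mul_add_card_mul_sub {ι : Type*} [Fintype ι] (f : ι → ℝ) (s : Finset ι)
    {a b : ℝ} (ha : ∀ i ∈ s, f i ≤ a) (hb : ∀ i ∉ s, f i ≤ b) :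
    ∑ i, f i ≤ Fintype.card ι * b + #s * (a - b) := by
  classical
  have hs : ∑ i ∈ s, f i ≤ #s * a := by simpa using sum_le_card_nsmul s f a ha
  have hsc : ∑ i ∈ sᶜ, f i ≤ #sᶜ * b := by
    simpa using sum_le_card_nsmul sᶜ f b fun i hi => hb i (mem_compl.mp hi)
  have hcard : (#sᶜ : ℝ) = Fintype.card ι - #s := by
    rw [card_compl, Nat.cast_sub (card_le_univ s)]
  rw [hcard] at hsc
  rw [← sum_add_sum_compl s]
  linarith

theorem InnerProductGeometry.angle_le_arccos_of_norm_add_sq {V : Type*}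
    [NormedAddCommGroup V] [InnerProductSpace ℝ V] {x y : V} (hx : ‖x‖ = 1) (hy : ‖y‖ = 1)
    {c : ℝ} (hc : 2 * c + 2 ≤ ‖x + y‖ ^ 2) :
    angle x y ≤ arccos c := by
  have hinner : c ≤ inner ℝ x y := by
    rw [norm_add_sq_real, hx, hy] at hc
    linarith
  unfold angle
  rw [hx, hy, mul_one, div_one]
  exact arccos_le_arccos hinner

section UnitSteps

variable {G X : Type*} [AddCommMonoidWithOne G] [PseudoMetricSpace X] {v : G → X}

theorem dist_add_natCast_le (hv : ∀ i, dist (v (i + 1)) (v i) ≤ 1) (p : G) (k : ℕ) :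
    dist (v p) (v (p + k)) ≤ k := by
  induction k with
  | zero => simp
  | succ k ih =>
    calc dist (v p) (v (p + (k + 1 : ℕ)))
        ≤ dist (v p) (v (p + k)) + dist (v (p + k + 1)) (v (p + k)) := by
          rw [dist_comm (v (p + k + 1))]
          push_cast
          rw [← add_assoc]
          exact dist_triangle _ _ _
      _ ≤ k + 1 := add_le_add ih (hv _)
      _ = (k + 1 : ℕ) := by push_cast; rfl

theorem dist_sub_le_dist_add_two (hv : ∀ i, dist (v (i + 1)) (v i) ≤ 1) (p : G) {r s : ℕ}
    (hs : s + 2 ≤ r) :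
    dist (v p) (v (p + r)) - (r - 2) ≤ dist (v (p + s)) (v (p + s + 2)) := by
  obtain ⟨m, rfl⟩ := Nat.exists_eq_add_of_le hs
  have hsp : p + ((s + 2 + m : ℕ) : G) = p + s + 2 + m := by push_cast; abel
  have h₁ := dist_add_natCast_le hv p s
  have h₂ := dist_add_natCast_le hv (p + s + 2) m
  have h₃ := dist_triangle4 (v p) (v (p + s)) (v (p + s + 2)) (v (p + s + 2 + m))
  rw [hsp]
  push_cast at *
  linarith

end UnitSteps

theorem ZMod.eq_add_natCast_val_sub {n : ℕ} [NeZero n] (p t : ZMod n) : t = p + (t - p).val := by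
  rw [ZMod.natCast_zmod_val, add_sub_cancel]

section ClosedPolygon

variable {n r : ℕ} [NeZero n] {X : Type*} [PseudoMetricSpace X] {v : ZMod n → X}

theorem eq_add_of_sub_one_lt_dist (hn : n = r + r) (hv : ∀ i, dist (v (i + 1)) (v i) ≤ 1)
    {i j : ZMod n} (h : r - 1 < dist (v i) (v j)) : j = i + r := by
  set a := (j - i).val
  have hj : j = i + a := ZMod.eq_add_natCast_val_sub i j
  have ha : a < n := ZMod.val_lt _
  have hback : j + (n - a : ℕ) = i := by
    rw [hj, add_assoc, ← Nat.cast_add, Nat.add_sub_cancel' ha.le, ZMod.natCast_self, add_zero]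
  have h₁ : dist (v i) (v j) ≤ a := hj ▸ dist_add_natCast_le hv i a
  have h₂ : dist (v j) (v i) ≤ (n - a : ℕ) := hback ▸ dist_add_natCast_le hv j (n - a)
  rw [dist_comm, Nat.cast_sub ha.le] at h₂
  have hnr : (n : ℝ) = r + r := by exact_mod_cast hn
  have h₃ : r < a + 1 := by exact_mod_cast (show (r : ℝ) < a + 1 by linarith)
  have h₄ : a < r + 1 := by exact_mod_cast (show (a : ℝ) < r + 1 by linarith)
  rw [hj, show a = r by omega]

theorem dist_sub_le_dist_add_two_of_ne (hn : n = r + r) (hv : ∀ i, dist (v (i + 1)) (v i) ≤ 1)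
    {p t : ZMod n} (hp : t + 1 ≠ p) (hq : t + 1 ≠ p + r) :
    dist (v p) (v (p + r)) - (r - 2) ≤ dist (v t) (v (t + 2)) := by
  set a := (t - p).val
  have ht : t = p + a := ZMod.eq_add_natCast_val_sub p t
  have ha : a < n := ZMod.val_lt _
  have har : a + 1 ≠ r := fun h => hq (by rw [ht, add_assoc, ← Nat.cast_add_one, h])
  have han : a + 1 ≠ n := fun h => hp (by rw [ht, add_assoc, ← Nat.cast_add_one, h,
    ZMod.natCast_self, add_zero])
  rcases le_or_gt (a + 2) r with hs | hs
  · exact ht ▸ dist_sub_le_dist_add_two hv p hs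
  · have hpr : p + r + r = p := by
      rw [add_assoc, ← Nat.cast_add, ← hn, ZMod.natCast_self, add_zero]
    have hpa : p + r + (a - r : ℕ) = t := by
      rw [ht, add_assoc, ← Nat.cast_add, Nat.add_sub_cancel' (by omega)]
    have := dist_sub_le_dist_add_two hv (p + r) (s := a - r) (r := r) (by omega)
    rwa [hpr, hpa, dist_comm] at this

end ClosedPolygon

open InnerProductGeometry Finset in
/-- For every even `n ≥ 4` there is `ε > 0` such that every closed
equilateral `n`-gon in `ℝ³` whose diameter is at least `n/2 − ε` has total
curvature strictly less than `4π` (hence, by Fary–Milnor, is unknotted). -/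
theorem totalCurvature_lt_four_pi_of_diameter_large (n : ℕ) [NeZero n]
    (hn : 4 ≤ n) (hev : Even n) :
    ∃ ε : ℝ, 0 < ε ∧
      ∀ v : ZMod n → EuclideanSpace ℝ (Fin 3),
        (∀ i : ZMod n, dist (v (i + 1)) (v i) = 1) →
        (∃ i j : ZMod n, (n : ℝ) / 2 - ε ≤ dist (v i) (v j)) →
        ∑ i : ZMod n,
            InnerProductGeometry.angle (v (i + 1) - v i)
              (v (i + 2) - v (i + 1)) < 4 * Real.pi := by
  obtain ⟨r, hr⟩ := hev
  set B := 2 * π / n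
  have hnB : n * B = 2 * π := mul_div_cancel₀ _ (NeZero.ne _ |> Nat.cast_ne_zero.mpr)
  have hB0 : 0 < B := by positivity
  have hBπ : B ≤ π / 2 := by
    rw [div_le_iff₀ (by positivity)]
    nlinarith [mul_le_mul_of_nonneg_left (by exact_mod_cast hn : (4 : ℝ) ≤ n) pi_pos.le]
  have hcos0 : 0 ≤ cos B := cos_nonneg_of_mem_Icc ⟨by linarith, hBπ⟩
  have hcos1 : cos B < 1 := by simpa using cos_lt_cos_of_nonneg_of_le_pi_div_two le_rfl hBπ hB0
  refine ⟨(1 - cos B) / 2, by linarith, ?_⟩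
  rintro v hv ⟨i, j, hij⟩
  have hv' : ∀ k, dist (v (k + 1)) (v k) ≤ 1 := fun k => (hv k).le
  have hnr : (n : ℝ) / 2 = r := by rw [hr]; push_cast; ring
  have hj : j = i + r := eq_add_of_sub_one_lt_dist hr hv' (by linarith)
  have hturn : ∀ t, t + 1 ≠ i → t + 1 ≠ j →
      angle (v (t + 1) - v t) (v (t + 2) - v (t + 1)) ≤ B := by
    intro t hti htj
    have hchord := dist_sub_le_dist_add_two_of_ne hr hv' hti (hj ▸ htj)
    rw [← hj] at hchord
    rw [← arccos_cos hB0.le (by linarith)]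
    apply angle_le_arccos_of_norm_add_sq
    · rw [← dist_eq_norm]; exact hv t
    · rw [← dist_eq_norm, ← hv (t + 1), add_assoc, one_add_one_eq_two]
    · rw [sub_add_sub_cancel', ← dist_eq_norm, dist_comm]; nlinarith
  have hsum := sum_le_card_mul_add_card_mul_sub
    (fun t => angle (v (t + 1) - v t) (v (t + 2) - v (t + 1))) {i - 1, j - 1}
    (fun t _ => angle_le_pi _ _) fun t ht => by
      simp only [mem_insert, mem_singleton, not_or] at ht
      exact hturn t (fun h => ht.1 (eq_sub_of_add_eq h)) fun h => ht.2 (eq_sub_of_add_eq h)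
  rw [ZMod.card] at hsum
  calc _ ≤ n * B + #{i - 1, j - 1} * (π - B) := hsum
    _ ≤ n * B + 2 * (π - B) := by
        gcongr
        · linarith
        · exact_mod_cast card_le_two
    _ < 4 * π := by linarith
end
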